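/- Let F : ℂ → ℂ be entire, and let A₁ > 0 and A₂ > 0 satisfy |F(z)| ≤ exp(A₁ + A₂ |log|z||³) for every z ∈ ℂ with z ≠ 0. Then there exist constants α > 0 and β > 0 such that the Taylor coefficients a_n = F⁽ⁿ⁾(0)/n! of F at 0 satisfy |a_n| ≤ α exp(−β n^{3/2}) for all n ∈ ℕ. -/

import Mathlib

/-!
Cauchy's estimate on the circle of radius `R = eᵗ` gives
`|a_n| ≤ exp (A₁ + A₂ t³ - n t)`. The exponent is minimised at `t = √(n / (3 A₂))`,
where it equals `A₁ - (2 / (3 √(3 A₂))) n^{3/2}`.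
-/

open Real Metric

lemma Real.rpow_three_halves {x : ℝ} (hx : 0 ≤ x) : x ^ (3 / 2 : ℝ) = x * √x := by
  rw [show (3 / 2 : ℝ) = 1 + 1 / 2 by norm_num, rpow_add' hx (by norm_num), rpow_one,
    ← sqrt_eq_rpow]

lemma cubic_sub_linear_at_critical_point {a x : ℝ} (ha : 0 < a) (hx : 0 ≤ x) :
    a * √(x / (3 * a)) ^ 3 - x * √(x / (3 * a)) = -(2 / (3 * √(3 * a))) * x ^ (3 / 2 : ℝ) := by
  rw [Real.rpow_three_halves hx, sqrt_div hx]
  field_simp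
  rw [sq_sqrt hx, sq_sqrt (by positivity)]
  ring

lemma norm_iteratedDeriv_div_factorial_le {f : ℂ → ℂ} {c : ℂ} {R C : ℝ} (n : ℕ) (hR : 0 < R)
    (hf : DiffContOnCl ℂ f (ball c R)) (hC : ∀ z ∈ sphere c R, ‖f z‖ ≤ C) :
    ‖iteratedDeriv n f c / n.factorial‖ ≤ C / R ^ n := by
  have hfac : (0 : ℝ) < n.factorial := by positivity
  rw [norm_div, Complex.norm_natCast, div_le_iff₀ hfac, div_mul_eq_mul_div, mul_comm]
  exact Complex.norm_iteratedDeriv_le_of_forall_mem_sphere_norm_le n hR hf hC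

theorem stmt_15_general (F : ℂ → ℂ) (hF : Differentiable ℂ F)
    (A₁ A₂ : ℝ) (hA₂ : 0 < A₂)
    (hbound : ∀ z : ℂ, z ≠ 0 →
      ‖F z‖ ≤ Real.exp (A₁ + A₂ * |Real.log ‖z‖| ^ 3)) :
    ∃ α β : ℝ, 0 < α ∧ 0 < β ∧ ∀ n : ℕ,
      ‖iteratedDeriv n F 0 / (n.factorial : ℂ)‖
        ≤ α * Real.exp (-β * (n : ℝ) ^ (3/2 : ℝ)) := by
  refine ⟨exp A₁, 2 / (3 * √(3 * A₂)), exp_pos _, by positivity, fun n => ?_⟩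
  set t := √(n / (3 * A₂))
  have ht : 0 ≤ t := sqrt_nonneg _
  have hsphere : ∀ z ∈ sphere (0 : ℂ) (exp t), ‖F z‖ ≤ exp (A₁ + A₂ * t ^ 3) := by
    intro z hz
    have hz_norm : ‖z‖ = exp t := mem_sphere_zero_iff_norm.1 hz
    have hz_ne : z ≠ 0 := norm_ne_zero_iff.1 (hz_norm ▸ (exp_pos t).ne')
    simpa [hz_norm, abs_of_nonneg ht] using hbound z hz_ne
  calc _ ≤ exp (A₁ + A₂ * t ^ 3) / exp t ^ n :=
        norm_iteratedDeriv_div_factorial_le n (exp_pos t) hF.diffContOnCl hsphere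
    _ = exp A₁ * exp (A₂ * t ^ 3 - n * t) := by
        rw [← exp_nat_mul, ← exp_sub, ← exp_add, add_sub_assoc]
    _ = _ := by rw [cubic_sub_linear_at_critical_point hA₂ n.cast_nonneg]

/-- If `F` is entire with `|F(z)| ≤ exp(A₁ + A₂ |log|z||³)` for
`z ≠ 0`, then its Taylor coefficients at `0` satisfy `|a_n| ≤ α exp(−β n^{3/2})`
for some `α, β > 0`. -/
theorem stmt_15 (F : ℂ → ℂ) (hF : Differentiable ℂ F)
    (A₁ A₂ : ℝ) (hA₁ : 0 < A₁) (hA₂ : 0 < A₂)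
    (hbound : ∀ z : ℂ, z ≠ 0 →
      ‖F z‖ ≤ Real.exp (A₁ + A₂ * |Real.log ‖z‖| ^ 3)) :
    ∃ α β : ℝ, 0 < α ∧ 0 < β ∧ ∀ n : ℕ,
      ‖iteratedDeriv n F 0 / (n.factorial : ℂ)‖
        ≤ α * Real.exp (-β * (n : ℝ) ^ (3/2 : ℝ)) :=
  stmt_15_general F hF A₁ A₂ hA₂ hbound
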